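/- arXiv:1306.1895 — 4 statements merged into one kernel-verified Lean document; each statement's English description precedes it below -/
import Mathlib

section
/- L_S is a Sierpinski object in L-Top: for every L-topological space (X, τ), every L-topological space (Y, δ), and every map g : Y → X, the map g is continuous from (Y, δ) to (X, τ) if and only if for every continuous map f : (X, τ) → L_S the composite f ∘ g is continuous from (Y, δ) to L_S. -/
universe u v

/-- `τ` is an `L`-topology on `X`: a set of `L`-sets closed under arbitrary pointwise
suprema (including the empty one, `⊥`) and finite pointwise infima (including the
empty one, `⊤`). -/
def IsLTop {L : Type*} [Order.Frame L] {X : Type*} (τ : Set (X → L)) : Prop :=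
  (∀ S ⊆ τ, sSup S ∈ τ) ∧ ∀ S ⊆ τ, S.Finite → sInf S ∈ τ

/-- `f` is continuous from `(X, τ)` to `(Y, δ)`. -/
def LCont {L : Type*} [Order.Frame L] {X Y : Type*}
    (τ : Set (X → L)) (δ : Set (Y → L)) (f : X → Y) : Prop :=
  ∀ ν ∈ δ, ν ∘ f ∈ τ

/-- The Sierpinski `L`-topology on `L`: generated by `id`, it consists of the constant
function `⊥`, the identity, and the constant function `⊤`. -/
def sierpinskiLTop (L : Type*) [Order.Frame L] : Set (L → L) :=
  {⊥, id, ⊤}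

/-- `(X, τ)` is a T₀ `L`-topological space. -/
def IsT0LTop {L : Type*} [Order.Frame L] {X : Type*} (τ : Set (X → L)) : Prop :=
  ∀ x y : X, x ≠ y → ∃ μ ∈ τ, μ x ≠ μ y

/-- `f : (X,τ) → (Y,δ)` is an embedding: `f` is injective and `τ = {ν ∘ f | ν ∈ δ}`. -/
def IsLEmbedding {L : Type*} [Order.Frame L] {X Y : Type*}
    (τ : Set (X → L)) (δ : Set (Y → L)) (f : X → Y) : Prop :=
  Function.Injective f ∧ τ = {μ | ∃ ν ∈ δ, μ = ν ∘ f}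

/-- The smallest `L`-topology containing a family `ζ` of `L`-sets. -/
def genLTop {L : Type*} [Order.Frame L] {X : Type*} (ζ : Set (X → L)) : Set (X → L) :=
  ⋂₀ {τ | IsLTop τ ∧ ζ ⊆ τ}

/-- The product `L`-topology on `∀ i, X i`: the smallest `L`-topology containing all
`ν ∘ pᵢ` with `ν ∈ τ i`. -/
def prodLTop {L : Type*} [Order.Frame L] {I : Type*} {X : I → Type*}
    (τ : ∀ i, Set (X i → L)) : Set ((∀ i, X i) → L) :=
  genLTop {μ | ∃ i, ∃ ν ∈ τ i, μ = fun x => ν (x i)}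

/-- The product of `I` copies of the Sierpinski `L`-space, `L_S^I`. -/
def sierpinskiPow (L : Type*) [Order.Frame L] (I : Type*) : Set ((I → L) → L) :=
  prodLTop fun _ : I => sierpinskiLTop L

/-- The subspace `L`-topology on `M ⊆ Y`: restrictions of members of `δ`. -/
def subLTop {L : Type*} [Order.Frame L] {Y : Type*} (δ : Set (Y → L)) (M : Set Y) :
    Set (↥M → L) :=
  {ν | ∃ μ ∈ δ, ν = fun y => μ y.1}

/-- Homeomorphism: a continuous bijection with continuous inverse. -/
def IsLHomeo {L : Type*} [Order.Frame L] {X Y : Type*}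
    (τ : Set (X → L)) (δ : Set (Y → L)) (f : X → Y) : Prop :=
  LCont τ δ f ∧
    ∃ g : Y → X, LCont δ τ g ∧ Function.LeftInverse g f ∧ Function.RightInverse g f

/-- Epimorphism in `L`-**Top₀**. -/
def IsLEpiT0 {L : Type*} [Order.Frame L] {X Y : Type*}
    (τ : Set (X → L)) (δ : Set (Y → L)) (f : X → Y) : Prop :=
  ∀ (Z : Type*) (Δ : Set (Z → L)), IsLTop Δ → IsT0LTop Δ →
    ∀ g h : Y → Z, LCont δ Δ g → LCont δ Δ h → g ∘ f = h ∘ f → g = h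

/-- The `[ ]`-closure of `M` in `(Y, δ)`: the intersection of the equalizers of all pairs
of continuous maps into T₀ `L`-topological spaces that agree on `M`. -/
def brClosure {L : Type*} [Order.Frame L] {Y : Type*} (δ : Set (Y → L)) (M : Set Y) :
    Set Y :=
  {y | ∀ (Z : Type*) (Δ : Set (Z → L)), IsLTop Δ → IsT0LTop Δ →
    ∀ g h : Y → Z, LCont δ Δ g → LCont δ Δ h → (∀ m ∈ M, g m = h m) → g y = h y}

/-- `p` is a frame homomorphism from the frame `τ` (ordered pointwise, with pointwise
suprema and finite infima) to `L`: it preserves arbitrary suprema and finite infima. -/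
def IsLFrameHom {L : Type*} [Order.Frame L] {X : Type*} (τ : Set (X → L))
    (p : ↥τ → L) : Prop :=
  (∀ (S : Set (X → L)) (hS : S ⊆ τ) (h : sSup S ∈ τ),
    p ⟨sSup S, h⟩ = ⨆ μ : S, p ⟨μ.1, hS μ.2⟩) ∧
  ∀ (S : Set (X → L)) (hS : S ⊆ τ), S.Finite → ∀ h : sInf S ∈ τ,
    p ⟨sInf S, h⟩ = ⨅ μ : S, p ⟨μ.1, hS μ.2⟩

/-- `pt_L(τ)`: the collection of frame homomorphisms `τ → L`. -/
def LPt {L : Type*} [Order.Frame L] {X : Type*} (τ : Set (X → L)) : Type _ :=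
  {p : ↥τ → L // IsLFrameHom τ p}

/-- The `L`-topology `φ_L(τ) = {φ_L(μ) | μ ∈ τ}` on `pt_L(τ)`, where `φ_L(μ)(p) = p(μ)`. -/
def phiTop {L : Type*} [Order.Frame L] {X : Type*} (τ : Set (X → L)) :
    Set (LPt τ → L) :=
  {ν | ∃ μ : ↥τ, ν = fun p => p.1 μ}

/-- `(X, τ)` is sober: every frame homomorphism `p : τ → L` is given by evaluation at a
unique point of `X`. -/
def IsLSober {L : Type*} [Order.Frame L] {X : Type*} (τ : Set (X → L)) : Prop :=
  ∀ p : ↥τ → L, IsLFrameHom τ p → ∃! x : X, ∀ μ : ↥τ, p μ = μ.1 x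

/-- `η_X : X → pt_L(τ)`, `η_X(x)(μ) = μ(x)`. -/
def etaPt {L : Type*} [Order.Frame L] {X : Type*} (τ : Set (X → L)) (x : X) : LPt τ :=
  ⟨fun μ => μ.1 x,
    ⟨fun S hS h => by simp [sSup_apply], fun S hS hfin h => by simp [sInf_apply]⟩⟩

/-- The image `f^→(μ)` of an `L`-set under a map. -/
def LImage {L : Type*} [Order.Frame L] {X Y : Type*} (f : X → Y) (μ : X → L) : Y → L :=
  fun y => ⨆ x ∈ f ⁻¹' {y}, μ x

/-- The T₀-identification relation: `x ~ y` iff `μ x = μ y` for all `μ ∈ τ`. -/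
def t0Rel {L : Type*} [Order.Frame L] {X : Type*} (τ : Set (X → L)) (x y : X) : Prop :=
  ∀ μ ∈ τ, μ x = μ y

/-- The quotient `X/~`. -/
def T0Quot {L : Type*} [Order.Frame L] {X : Type*} (τ : Set (X → L)) : Type _ :=
  Quot (t0Rel τ)

/-- The quotient map `q : X → X/~`. -/
def t0q {L : Type*} [Order.Frame L] {X : Type*} (τ : Set (X → L)) : X → T0Quot τ :=
  Quot.mk _

/-- The quotient `L`-topology on `X/~`. -/
def t0QuotTop {L : Type*} [Order.Frame L] {X : Type*} (τ : Set (X → L)) :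
    Set (T0Quot τ → L) :=
  {ν | ν ∘ t0q τ ∈ τ}

/-- All finite pointwise infima of members of `ζ`. -/
def finInfs {L : Type*} [Order.Frame L] {X : Type*} (ζ : Set (X → L)) : Set (X → L) :=
  {μ | ∃ F ⊆ ζ, F.Finite ∧ μ = sInf F}

/-- `⟨ζ⟩`: all pointwise suprema of sets of finite pointwise infima of members of `ζ`. -/
def genSupInf {L : Type*} [Order.Frame L] {X : Type*} (ζ : Set (X → L)) : Set (X → L) :=
  {μ | ∃ G ⊆ finInfs ζ, μ = sSup G}

section LTopology

variable {L : Type*} [Order.Frame L] {X Y Z : Type*}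

theorem IsLTop.bot_mem {τ : Set (X → L)} (hτ : IsLTop τ) : (⊥ : X → L) ∈ τ := by
  simpa using hτ.1 ∅ (Set.empty_subset τ)

theorem IsLTop.top_mem {τ : Set (X → L)} (hτ : IsLTop τ) : (⊤ : X → L) ∈ τ := by
  simpa using hτ.2 ∅ (Set.empty_subset τ) Set.finite_empty

theorem LCont.comp {τ : Set (X → L)} {δ : Set (Y → L)} {σ : Set (Z → L)} {g : Y → X}
    {f : X → Z} (hf : LCont τ σ f) (hg : LCont δ τ g) : LCont δ σ (f ∘ g) :=
  fun ν hν => hg _ (hf ν hν)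

theorem LCont.mem_of_sierpinskiLTop {τ : Set (X → L)} {f : X → L}
    (hf : LCont τ (sierpinskiLTop L) f) : f ∈ τ :=
  hf id (by simp [sierpinskiLTop])

theorem lCont_sierpinskiLTop_of_mem {τ : Set (X → L)} (hτ : IsLTop τ) {f : X → L}
    (hf : f ∈ τ) : LCont τ (sierpinskiLTop L) f := by
  rintro ν (rfl | rfl | rfl)
  · exact hτ.bot_mem
  · exact hf
  · exact hτ.top_mem

end LTopology

theorem stmt1_general {L : Type*} [Order.Frame L] {X Y : Type*}
    (τ : Set (X → L)) (δ : Set (Y → L)) (hτ : IsLTop τ) (g : Y → X) :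
    LCont δ τ g ↔
      ∀ f : X → L, LCont τ (sierpinskiLTop L) f → LCont δ (sierpinskiLTop L) (f ∘ g) :=
  ⟨fun hg _ hf => hf.comp hg,
    fun h μ hμ => (h μ (lCont_sierpinskiLTop_of_mem hτ hμ)).mem_of_sierpinskiLTop⟩

/-- `L_S` is a Sierpinski object in `L`-**Top**: `g : (Y,δ) → (X,τ)` is continuous iff
`f ∘ g` is continuous for every continuous `f : (X,τ) → L_S`. -/
theorem stmt1 {L : Type*} [Order.Frame L] {X Y : Type*}
    (τ : Set (X → L)) (δ : Set (Y → L)) (hτ : IsLTop τ) (hδ : IsLTop δ) (g : Y → X) :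
    LCont δ τ g ↔
      ∀ f : X → L, LCont τ (sierpinskiLTop L) f → LCont δ (sierpinskiLTop L) (f ∘ g) :=
  stmt1_general τ δ hτ g
end

section
/- The Sierpinski L-topological space L_S is sober: for every frame homomorphism p : σ_S → L there exists a unique a ∈ L such that p(ν) = ν(a) for all ν ∈ σ_S. -/
universe u v

/-- The Sierpinski `L`-topological space is sober: every frame homomorphism
`p : σ_S → L` is evaluation at a unique `a ∈ L`. -/
theorem stmt9 {L : Type*} [Order.Frame L] : IsLSober (sierpinskiLTop L) := by
  intro p hp
  have hbot : (⊥ : L → L) ∈ sierpinskiLTop L := Or.inl rfl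
  have hid : (id : L → L) ∈ sierpinskiLTop L := Or.inr (Or.inl rfl)
  have htop : (⊤ : L → L) ∈ sierpinskiLTop L := Or.inr (Or.inr rfl)
  have hpbot : p ⟨⊥, hbot⟩ = ⊥ := by
    have h : sSup (∅ : Set (L → L)) ∈ sierpinskiLTop L := by
      rw [sSup_empty]; exact hbot
    have := hp.1 ∅ (by simp) h
    simp only [iSup_of_empty] at this
    rw [show (⟨⊥, hbot⟩ : ↥(sierpinskiLTop L)) = ⟨sSup ∅, h⟩ from
      Subtype.ext sSup_empty.symm]
    exact this
  have hptop : p ⟨⊤, htop⟩ = ⊤ := by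
    have h : sInf (∅ : Set (L → L)) ∈ sierpinskiLTop L := by
      rw [sInf_empty]; exact htop
    have := hp.2 ∅ (by simp) Set.finite_empty h
    rw [show (⟨⊤, htop⟩ : ↥(sierpinskiLTop L)) = ⟨sInf ∅, h⟩ from
      Subtype.ext sInf_empty.symm, this]
    exact le_antisymm le_top (le_iInf fun ⟨x, hx⟩ => absurd hx (Set.notMem_empty x))
  refine ⟨p ⟨id, hid⟩, fun μ => ?_, fun b hb => ?_⟩
  · obtain ⟨μ, hμ⟩ := μ
    rcases hμ with rfl | rfl | rfl
    · simpa using hpbot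
    · rfl
    · simpa using hptop
  · exact (hb ⟨id, hid⟩).symm
end

section
/- For every T₀ L-topological space (X, τ): the space (pt_L(τ), φ_L(τ)) is a T₀ L-topological space, the map η_X : (X, τ) → (pt_L(τ), φ_L(τ)) is continuous, and η_X is an epimorphism in L-Top₀. -/
/-!
Every open of `φ_L(τ)` is `φ_L(μ)` for some `μ ∈ τ`, and `μ` is recovered as
`φ_L(μ) ∘ η_X`. Hence two continuous maps out of `pt_L(τ)` that agree after `η_X` pull every
open of a T₀ target back to the same open, so they agree. That `φ_L(τ)` is closed under
suprema and finite infima is the statement that the points of `τ` are frame homomorphisms.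
-/

universe u v

section LPt

variable {L : Type*} [Order.Frame L] {X : Type*} {τ : Set (X → L)}

lemma LPt.map_iSup (p : LPt τ) {ι : Type*} (c : ι → τ) (h : (⨆ i, (c i).1) ∈ τ) :
    p.1 ⟨⨆ i, (c i).1, h⟩ = ⨆ i, p.1 (c i) :=
  (p.2.1 (Set.range fun i => (c i).1) (by rintro _ ⟨i, rfl⟩; exact (c i).2) h).trans
    (Set.rangeFactorization_surjective.iSup_congr _ fun _ => rfl).symm

lemma LPt.map_iInf (p : LPt τ) {ι : Type*} [Finite ι] (c : ι → τ) (h : (⨅ i, (c i).1) ∈ τ) :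
    p.1 ⟨⨅ i, (c i).1, h⟩ = ⨅ i, p.1 (c i) :=
  (p.2.2 (Set.range fun i => (c i).1) (by rintro _ ⟨i, rfl⟩; exact (c i).2)
    (Set.finite_range _) h).trans
    (Set.rangeFactorization_surjective.iInf_congr _ fun _ => rfl).symm

lemma sSup_mem_phiTop (hτ : IsLTop τ) {S : Set (LPt τ → L)} (hS : S ⊆ phiTop τ) :
    sSup S ∈ phiTop τ := by
  choose c hc using fun ν : S => hS ν.2
  have hsup : (⨆ ν, (c ν).1) ∈ τ :=
    hτ.1 _ (by rintro _ ⟨ν, rfl⟩; exact (c ν).2)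
  refine ⟨⟨_, hsup⟩, funext fun p => ?_⟩
  rw [sSup_apply, p.map_iSup c hsup]
  exact iSup_congr fun ν => congrFun (hc ν) p

lemma sInf_mem_phiTop (hτ : IsLTop τ) {S : Set (LPt τ → L)} (hS : S ⊆ phiTop τ)
    (hfin : S.Finite) : sInf S ∈ phiTop τ := by
  have : Finite S := hfin
  choose c hc using fun ν : S => hS ν.2
  have hinf : (⨅ ν, (c ν).1) ∈ τ :=
    hτ.2 _ (by rintro _ ⟨ν, rfl⟩; exact (c ν).2) (Set.finite_range _)
  refine ⟨⟨_, hinf⟩, funext fun p => ?_⟩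
  rw [sInf_apply, p.map_iInf c hinf]
  exact iInf_congr fun ν => congrFun (hc ν) p

lemma isLTop_phiTop (hτ : IsLTop τ) : IsLTop (phiTop τ) :=
  ⟨fun _ => sSup_mem_phiTop hτ, fun _ => sInf_mem_phiTop hτ⟩

lemma isT0LTop_phiTop : IsT0LTop (phiTop τ) := by
  intro p q hpq
  obtain ⟨μ, hμ⟩ := Function.ne_iff.mp fun h => hpq (Subtype.ext h)
  exact ⟨fun r : LPt τ => r.1 μ, ⟨μ, rfl⟩, hμ⟩

lemma lCont_etaPt : LCont τ (phiTop τ) (etaPt τ) := by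
  rintro _ ⟨μ, rfl⟩
  exact μ.2

lemma injOn_comp_etaPt : Set.InjOn (· ∘ etaPt τ) (phiTop τ) := by
  rintro _ ⟨μ, rfl⟩ _ ⟨μ', rfl⟩ h
  obtain rfl : μ = μ' := Subtype.ext h
  rfl

end LPt

lemma isLEpiT0_of_injOn_comp {L : Type*} [Order.Frame L] {X Y : Type*}
    {τ : Set (X → L)} {δ : Set (Y → L)} {f : X → Y} (hf : Set.InjOn (· ∘ f) δ) :
    IsLEpiT0 τ δ f := by
  intro Z Δ _ hΔ g h hg hh hgh
  funext y
  by_contra hne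
  obtain ⟨ξ, hξ, hξy⟩ := hΔ (g y) (h y) hne
  have hpull : ξ ∘ g = ξ ∘ h :=
    hf (hg ξ hξ) (hh ξ hξ) (by simp only [Function.comp_assoc, hgh])
  exact hξy (congrFun hpull y)

theorem stmt13_general {L : Type*} [Order.Frame L] {X : Type*} (τ : Set (X → L))
    (hτ : IsLTop τ) :
    IsLTop (phiTop τ) ∧ IsT0LTop (phiTop τ) ∧
    LCont τ (phiTop τ) (etaPt τ) ∧ IsLEpiT0 τ (phiTop τ) (etaPt τ) :=
  ⟨isLTop_phiTop hτ, isT0LTop_phiTop, lCont_etaPt, isLEpiT0_of_injOn_comp injOn_comp_etaPt⟩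

/-- For every T₀ `L`-topological space `(X, τ)`, the space `(pt_L(τ), φ_L(τ))` is a T₀
`L`-topological space, `η_X` is continuous, and `η_X` is an epimorphism in
`L`-**Top₀**. -/
theorem stmt13 {L : Type*} [Order.Frame L] {X : Type*} (τ : Set (X → L))
    (hτ : IsLTop τ) (hXT0 : IsT0LTop τ) :
    IsLTop (phiTop τ) ∧ IsT0LTop (phiTop τ) ∧
    LCont τ (phiTop τ) (etaPt τ) ∧ IsLEpiT0 τ (phiTop τ) (etaPt τ) :=
  stmt13_general τ hτ
end

section
/- Sober L-topological spaces are closed under products and [ ]-closed subspaces: (i) for any family (X_i, τ_i), i ∈ I, of sober L-topological spaces, the product ∏_{i∈I} X_i with the product L-topology is sober; (ii) if (Y, δ) is a sober L-topological space and M ⊆ Y satisfies [M] = M, then the subspace (M, δ_M) is sober. -/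
universe u v

/-!
Every continuous `f : (X, τ) → (Y, δ)` turns a frame homomorphism `p : τ → L` into one on `δ`,
`ν ↦ p (ν ∘ f)`. On a product, pulling back along the projections and using the sobriety of the
factors gives a point `x`; the set of opens on which `p` agrees with evaluation at `x` is an
`L`-topology containing the subbasic opens, hence everything. On a subspace `M ⊆ Y`, pulling back
along the inclusion gives a point `y ∈ Y` at which any two opens agreeing on `M` agree; composing
with pairs of continuous maps into T₀ spaces shows `y ∈ [M] = M`.
-/

section

variable {L : Type*} [Order.Frame L] {X Y : Type*}

theorem isLTop_genLTop (ζ : Set (X → L)) : IsLTop (genLTop ζ) :=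
  ⟨fun S hS => Set.mem_sInter.2 fun τ hτ =>
      hτ.1.1 S fun μ hμ => Set.mem_sInter.1 (hS hμ) τ hτ,
    fun S hS hfin => Set.mem_sInter.2 fun τ hτ =>
      hτ.1.2 S (fun μ hμ => Set.mem_sInter.1 (hS hμ) τ hτ) hfin⟩

theorem subset_genLTop (ζ : Set (X → L)) : ζ ⊆ genLTop ζ :=
  fun _ hμ => Set.mem_sInter.2 fun _ hτ => hτ.2 hμ

theorem genLTop_subset {ζ τ : Set (X → L)} (hτ : IsLTop τ) (hζ : ζ ⊆ τ) : genLTop ζ ⊆ τ :=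
  fun _ hμ => Set.mem_sInter.1 hμ τ ⟨hτ, hζ⟩

theorem lCont_prodLTop_apply {I : Type*} {X : I → Type*} (τ : ∀ i, Set (X i → L)) (i : I) :
    LCont (prodLTop τ) (τ i) fun x => x i :=
  fun ν hν => subset_genLTop _ ⟨i, ν, hν, rfl⟩

theorem lCont_subLTop_val (δ : Set (Y → L)) (M : Set Y) :
    LCont (subLTop δ M) δ Subtype.val :=
  fun μ hμ => ⟨μ, hμ, rfl⟩

theorem sSup_image_comp (S : Set (Y → L)) (f : X → Y) :
    sSup ((· ∘ f) '' S) = sSup S ∘ f := by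
  ext x
  rw [Function.comp_apply, sSup_apply, sSup_apply]
  exact (Set.imageFactorization_surjective.iSup_comp fun μ : ↥((· ∘ f) '' S) => μ.1 x).symm

theorem sInf_image_comp (S : Set (Y → L)) (f : X → Y) :
    sInf ((· ∘ f) '' S) = sInf S ∘ f := by
  ext x
  rw [Function.comp_apply, sInf_apply, sInf_apply]
  exact (Set.imageFactorization_surjective.iInf_comp fun μ : ↥((· ∘ f) '' S) => μ.1 x).symm

theorem IsLFrameHom.comp_lCont {τ : Set (X → L)} {δ : Set (Y → L)} {p : ↥τ → L}
    (hp : IsLFrameHom τ p) {f : X → Y} (hf : LCont τ δ f) :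
    IsLFrameHom δ fun ν => p ⟨ν.1 ∘ f, hf ν.1 ν.2⟩ := by
  have himage : ∀ S ⊆ δ, (· ∘ f) '' S ⊆ τ := by
    rintro S hS _ ⟨ν, hν, rfl⟩
    exact hf ν (hS hν)
  refine ⟨fun S hS h => ?_, fun S hS hfin h => ?_⟩
  · calc p ⟨sSup S ∘ f, hf _ h⟩
        = p ⟨sSup ((· ∘ f) '' S), sSup_image_comp S f ▸ hf _ h⟩ := by
          simp only [sSup_image_comp]
      _ = ⨆ μ : ↥((· ∘ f) '' S), p ⟨μ.1, himage S hS μ.2⟩ := hp.1 _ (himage S hS) _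
      _ = ⨆ ν : ↥S, p ⟨ν.1 ∘ f, hf ν.1 (hS ν.2)⟩ :=
          (Set.imageFactorization_surjective.iSup_comp _).symm
  · calc p ⟨sInf S ∘ f, hf _ h⟩
        = p ⟨sInf ((· ∘ f) '' S), sInf_image_comp S f ▸ hf _ h⟩ := by
          simp only [sInf_image_comp]
      _ = ⨅ μ : ↥((· ∘ f) '' S), p ⟨μ.1, himage S hS μ.2⟩ :=
          hp.2 _ (himage S hS) (hfin.image _) _
      _ = ⨅ ν : ↥S, p ⟨ν.1 ∘ f, hf ν.1 (hS ν.2)⟩ :=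
          (Set.imageFactorization_surjective.iInf_comp _).symm

theorem IsLFrameHom.eq_apply_of_genLTop {ζ : Set (X → L)} {p : ↥(genLTop ζ) → L}
    (hp : IsLFrameHom (genLTop ζ) p) {x : X}
    (hζ : ∀ μ (hμ : μ ∈ ζ), p ⟨μ, subset_genLTop ζ hμ⟩ = μ x) (μ : ↥(genLTop ζ)) :
    p μ = μ.1 x := by
  set σ : Set (X → L) := {μ | ∃ hμ : μ ∈ genLTop ζ, p ⟨μ, hμ⟩ = μ x}
  have hσ : IsLTop σ := by
    refine ⟨fun S hS => ?_, fun S hS hfin => ?_⟩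
    · have hS' : S ⊆ genLTop ζ := fun μ hμ => (hS hμ).1
      refine ⟨(isLTop_genLTop ζ).1 S hS', ?_⟩
      rw [hp.1 S hS', sSup_apply]
      exact iSup_congr fun μ => (hS μ.2).2
    · have hS' : S ⊆ genLTop ζ := fun μ hμ => (hS hμ).1
      refine ⟨(isLTop_genLTop ζ).2 S hS' hfin, ?_⟩
      rw [hp.2 S hS' hfin, sInf_apply]
      exact iInf_congr fun μ => (hS μ.2).2
  exact (genLTop_subset hσ (fun ν hν => ⟨_, hζ ν hν⟩) μ.2).2

theorem IsLSober.eq_of_forall_apply_eq {τ : Set (X → L)} (hτ : IsLSober τ) {x y : X}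
    (h : ∀ μ ∈ τ, μ x = μ y) : x = y := by
  obtain ⟨z, -, hz⟩ := hτ _ (etaPt τ x).2
  exact (hz x fun _ => rfl).trans (hz y fun μ => h μ.1 μ.2).symm

theorem mem_brClosure_of_forall {δ : Set (Y → L)} {M : Set Y} {y : Y}
    (h : ∀ μ₁ ∈ δ, ∀ μ₂ ∈ δ, (∀ m ∈ M, μ₁ m = μ₂ m) → μ₁ y = μ₂ y) : y ∈ brClosure δ M := by
  intro Z Δ _ hΔ g k hg hk hgk
  by_contra hne
  obtain ⟨ν, hν, hν_ne⟩ := hΔ (g y) (k y) hne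
  exact hν_ne (h _ (hg ν hν) _ (hk ν hν) fun m hm => congrArg ν (hgk m hm))

theorem isLSober_prodLTop {I : Type*} {X : I → Type*} {τ : ∀ i, Set (X i → L)}
    (hτ : ∀ i, IsLSober (τ i)) : IsLSober (prodLTop τ) := by
  intro p hp
  have hpi := fun i => hp.comp_lCont (lCont_prodLTop_apply τ i)
  choose x hx using fun i => (hτ i _ (hpi i)).exists
  refine ⟨x, hp.eq_apply_of_genLTop ?_, fun y hy => funext fun i => ?_⟩
  · rintro _ ⟨i, ν, hν, rfl⟩
    exact hx i ⟨ν, hν⟩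
  · exact (hτ i).eq_of_forall_apply_eq fun ν hν =>
      (hy ⟨_, lCont_prodLTop_apply τ i ν hν⟩).symm.trans (hx i ⟨ν, hν⟩)

theorem isLSober_subLTop {δ : Set (Y → L)} {M : Set Y} (hδ : IsLSober δ)
    (hM : brClosure δ M ⊆ M) : IsLSober (subLTop δ M) := by
  intro p hp
  obtain ⟨y, hy, hy_unique⟩ := hδ _ (hp.comp_lCont (lCont_subLTop_val δ M))
  have hyM : y ∈ M := hM <| mem_brClosure_of_forall fun μ₁ h₁ μ₂ h₂ hM₁₂ => by
    have hres : μ₁ ∘ Subtype.val = μ₂ ∘ (Subtype.val : M → Y) :=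
      funext fun m => hM₁₂ m.1 m.2
    exact (hy ⟨μ₁, h₁⟩).symm.trans ((congrArg p (Subtype.ext hres)).trans (hy ⟨μ₂, h₂⟩))
  refine ⟨⟨y, hyM⟩, ?_, fun m hm => Subtype.ext (hy_unique m.1 fun μ => hm _)⟩
  rintro ⟨_, μ, hμ, rfl⟩
  exact hy ⟨μ, hμ⟩

end

/-- Sober `L`-topological spaces are closed under products and `[ ]`-closed
subspaces. -/
theorem stmt18 {L : Type*} [Order.Frame L] :
    (∀ (I : Type*) (X : I → Type*) (τ : ∀ i, Set (X i → L)),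
      (∀ i, IsLTop (τ i)) → (∀ i, IsLSober (τ i)) → IsLSober (prodLTop τ)) ∧
    ∀ (Y : Type*) (δ : Set (Y → L)) (M : Set Y),
      IsLTop δ → IsLSober δ → brClosure δ M = M → IsLSober (subLTop δ M) :=
  ⟨fun _ _ _ _ hτ => isLSober_prodLTop hτ, fun _ _ _ _ hδ hM => isLSober_subLTop hδ hM.subset⟩
end
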